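/- Let L_n be the graph on planar layouts of irreducible planar tanglegrams of size n with edges given by rotations (rotate at a vertex in one tree; if a proper subtanglegram is formed, additionally rotate at the corresponding vertex in the other tree). Then L_n is isomorphic to the flip graph D_{n+1} on pairs of disjoint triangulations of a convex (n+1)-gon. -/

import Mathlib

/-- A diagonal of the convex `n`-gon: an unordered pair of distinct,
non-adjacent vertices (vertices labeled by `Fin n` in cyclic order). -/
def IsDiag (n : ℕ) (d : Sym2 (Fin n)) : Prop :=
  ∃ a b : Fin n, d = s(a, b) ∧ a ≠ b ∧
    (a.val + 1) % n ≠ b.val ∧ (b.val + 1) % n ≠ a.val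

/-- Two diagonals of the convex `n`-gon cross (their endpoints strictly
interleave around the polygon). -/
def Crosses (n : ℕ) (d e : Sym2 (Fin n)) : Prop :=
  (∃ a b c c' : Fin n, d = s(a, b) ∧ e = s(c, c') ∧ a < c ∧ c < b ∧ b < c') ∨
  (∃ a b c c' : Fin n, e = s(a, b) ∧ d = s(c, c') ∧ a < c ∧ c < b ∧ b < c')

/-- A triangulation of the convex `n`-gon: a maximal set of pairwise
noncrossing diagonals. -/
structure Triangulation (n : ℕ) where
  diags : Finset (Sym2 (Fin n))
  isDiag : ∀ d ∈ diags, IsDiag n d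
  noncross : ∀ d ∈ diags, ∀ e ∈ diags, ¬ Crosses n d e
  maximal : ∀ d, IsDiag n d → (∀ e ∈ diags, ¬ Crosses n d e) → d ∈ diags

/-- `IsFlip T d T'` : the triangulation `T'` is obtained from `T` by flipping
the diagonal `d` (removing `d`, keeping all other diagonals, and inserting the
opposite diagonal of the resulting quadrilateral). -/
def IsFlip {n : ℕ} (T : Triangulation n) (d : Sym2 (Fin n)) (T' : Triangulation n) : Prop :=
  d ∈ T.diags ∧ d ∉ T'.diags ∧ ∀ e ∈ T.diags, e ≠ d → e ∈ T'.diags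

/-- Two triangulations are related by a single diagonal flip. -/
def FlipAdj {n : ℕ} (T T' : Triangulation n) : Prop := ∃ d, IsFlip T d T'

/-- `d'` is the new diagonal created when passing from `T` to `T'`. -/
def NewDiag {n : ℕ} (T T' : Triangulation n) (d' : Sym2 (Fin n)) : Prop :=
  d' ∈ T'.diags ∧ d' ∉ T.diags

/-- Flip of a pair of triangulations at a diagonal of the first coordinate:
flip it there, and if the new diagonal lies in the second triangulation,
flip it there as well. -/
def PairFlipFst {n : ℕ} (p q : Triangulation n × Triangulation n) : Prop :=
  ∃ d T₁' d', IsFlip p.1 d T₁' ∧ NewDiag p.1 T₁' d' ∧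
    ((d' ∉ p.2.diags ∧ q = (T₁', p.2)) ∨
     (d' ∈ p.2.diags ∧ ∃ T₂', IsFlip p.2 d' T₂' ∧ q = (T₁', T₂')))

/-- Flip of a pair of triangulations at a diagonal of the second coordinate. -/
def PairFlipSnd {n : ℕ} (p q : Triangulation n × Triangulation n) : Prop :=
  ∃ d T₂' d', IsFlip p.2 d T₂' ∧ NewDiag p.2 T₂' d' ∧
    ((d' ∉ p.1.diags ∧ q = (p.1, T₂')) ∨
     (d' ∈ p.1.diags ∧ ∃ T₁', IsFlip p.1 d' T₁' ∧ q = (T₁', T₂')))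

/-- The flip operation on ordered pairs of triangulations. -/
def PairFlip {n : ℕ} (p q : Triangulation n × Triangulation n) : Prop :=
  PairFlipFst p q ∨ PairFlipSnd p q

/-- Vertices of the flip graph `D_n`: ordered pairs of triangulations of the
convex `n`-gon sharing no diagonal. -/
def DVert (n : ℕ) := {p : Triangulation n × Triangulation n // Disjoint p.1.diags p.2.diags}

/-- The flip graph `D_n` on ordered pairs of disjoint triangulations. -/
def DGraph (n : ℕ) : SimpleGraph (DVert n) where
  Adj p q := p ≠ q ∧ (PairFlip p.1 q.1 ∨ PairFlip q.1 p.1)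
  symm := ⟨fun _ _ h => ⟨h.1.symm, h.2.symm⟩⟩
  loopless := ⟨fun _ h => h.1 rfl⟩

/-- The flip graph `T_n` on all triangulations of the convex `n`-gon. -/
def TriGraph (n : ℕ) : SimpleGraph (Triangulation n) where
  Adj T T' := T ≠ T' ∧ (FlipAdj T T' ∨ FlipAdj T' T)
  symm := ⟨fun _ _ h => ⟨h.1.symm, h.2.symm⟩⟩
  loopless := ⟨fun _ h => h.1 rfl⟩

/-- Vertices of `T_n(S)`: triangulations disjoint from `S`. -/
def TnSVert (n : ℕ) (S : Triangulation n) := {T : Triangulation n // Disjoint T.diags S.diags}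

/-- The flip graph `T_n(S)` induced on triangulations disjoint from `S`. -/
def TnS (n : ℕ) (S : Triangulation n) : SimpleGraph (TnSVert n S) where
  Adj T T' := T ≠ T' ∧ (FlipAdj T.1 T'.1 ∨ FlipAdj T'.1 T.1)
  symm := ⟨fun _ _ h => ⟨h.1.symm, h.2.symm⟩⟩
  loopless := ⟨fun _ h => h.1 rfl⟩

/-- A rooted plane binary tree (leaves unlabeled; children ordered). -/
inductive PTree : Type
  | leaf : PTree
  | node : PTree → PTree → PTree

/-- Number of leaves of a plane binary tree. -/
def PTree.leaves : PTree → ℕ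
  | .leaf => 1
  | .node l r => l.leaves + r.leaves

/-- The set of diagonals of the plane dual triangulation of a plane binary
tree whose leaves occupy positions `a, a+1, …, a + leaves - 1`: the subtree
spanning leaf positions `[b, c)` contributes the diagonal `(b, c)` of the
polygon whenever it is a proper subtree with at least two leaves. -/
def PTree.dualAux : PTree → ℕ → Finset (Sym2 ℕ)
  | .leaf, _ => ∅
  | .node l r, a =>
      l.dualAux a ∪ r.dualAux (a + l.leaves) ∪
        (if 2 ≤ l.leaves then {s(a, a + l.leaves)} else ∅) ∪
        (if 2 ≤ r.leaves then {s(a + l.leaves, a + l.leaves + r.leaves)} else ∅)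

/-- The plane dual triangulation of a plane binary tree `P` with `k` leaves,
as the set of diagonals of a convex `(k+1)`-gon with vertices `0, 1, …, k`
(the standard Catalan bijection). -/
def PTree.dual (P : PTree) : Finset (Sym2 ℕ) := P.dualAux 0

/-- The rotation relation on plane binary trees: `Rot P P'` holds when `P'`
is obtained from `P` by a single rotation at a (necessarily non-root,
internal) vertex. -/
inductive Rot : PTree → PTree → Prop
  | base (P₁ P₂ P₃ : PTree) :
      Rot (.node (.node P₁ P₂) P₃) (.node P₁ (.node P₂ P₃))
  | base' (P₁ P₂ P₃ : PTree) :
      Rot (.node P₁ (.node P₂ P₃)) (.node (.node P₁ P₂) P₃)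
  | left {L L' : PTree} (R : PTree) : Rot L L' → Rot (.node L R) (.node L' R)
  | right (L : PTree) {R R' : PTree} : Rot R R' → Rot (.node L R) (.node L R')

/-- `SubAt P a u` : `u` is a subtree of `P` whose leaves occupy the positions
`a, a+1, …, a + u.leaves - 1` among the leaves of `P` (left to right). -/
inductive SubAt : PTree → ℕ → PTree → Prop
  | refl (t : PTree) : SubAt t 0 t
  | left {l u : PTree} {a : ℕ} (r : PTree) : SubAt l a u → SubAt (.node l r) a u
  | right (l : PTree) {r u : PTree} {a : ℕ} :
      SubAt r a u → SubAt (.node l r) (l.leaves + a) u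

/-- A planar layout, given by its pair of plane binary trees (the matching
joins the leaves in equal positions), has a proper subtanglegram iff both
trees have a subtree with at least `2` leaves occupying the same proper
interval of leaf positions. `IrredLayout` says there is no such pair, i.e.
the layout is a layout of an irreducible tanglegram. -/
def IrredLayout (p : PTree × PTree) : Prop :=
  ¬ ∃ (a : ℕ) (u v : PTree), SubAt p.1 a u ∧ SubAt p.2 a v ∧
      u.leaves = v.leaves ∧ 2 ≤ u.leaves ∧ u.leaves < p.1.leaves

/-- Rotation of a layout at a vertex of the first tree: rotate there; if the
resulting layout has a proper subtanglegram, additionally rotate in the second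
tree so as to remove it. -/
def LRelFst (p q : PTree × PTree) : Prop :=
  ∃ P₁', Rot p.1 P₁' ∧
    ((IrredLayout (P₁', p.2) ∧ q = (P₁', p.2)) ∨
     (¬ IrredLayout (P₁', p.2) ∧
       ∃ P₂', Rot p.2 P₂' ∧ IrredLayout (P₁', P₂') ∧ q = (P₁', P₂')))

/-- Rotation of a layout at a vertex of the second tree. -/
def LRelSnd (p q : PTree × PTree) : Prop :=
  ∃ P₂', Rot p.2 P₂' ∧
    ((IrredLayout (p.1, P₂') ∧ q = (p.1, P₂')) ∨
     (¬ IrredLayout (p.1, P₂') ∧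
       ∃ P₁', Rot p.1 P₁' ∧ IrredLayout (P₁', P₂') ∧ q = (P₁', P₂')))

/-- The rotation operation on planar layouts of irreducible planar
tanglegrams. -/
def LRel (p q : PTree × PTree) : Prop := LRelFst p q ∨ LRelSnd p q

/-- Vertices of the graph `L_n`: planar layouts of irreducible planar
tanglegrams of size `n`. -/
def LVert (n : ℕ) :=
  {p : PTree × PTree // p.1.leaves = n ∧ p.2.leaves = n ∧ IrredLayout p}

/-- The graph `L_n` on planar layouts of irreducible planar tanglegrams of
size `n`, with edges given by rotations. -/
def LGraph (n : ℕ) : SimpleGraph (LVert n) where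
  Adj p q := p ≠ q ∧ (LRel p.1 q.1 ∨ LRel q.1 p.1)
  symm := ⟨fun _ _ h => ⟨h.1.symm, h.2.symm⟩⟩
  loopless := ⟨fun _ h => h.1 rfl⟩

/-!
A plane binary tree with `n` leaves is dual to a triangulation of the polygon with vertices
`0, 1, …, n`: the leaf positions of every subtree form an interval `[x, y)`, and these intervals
are the sides and diagonals `{x, y}` of the triangulation. Laminarity of the intervals is
noncrossing of the diagonals, and a maximal laminar family of intervals is the family of a unique
tree. A rotation replaces exactly one interval; conversely, a flip must replace a diagonal `d` by
the unique diagonal crossing `d` and no other diagonal, which is the interval created by the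
rotation at the edge dual to `d`. So rotations are exactly flips. A layout has a proper
subtanglegram iff its two trees share a proper interval with at least two leaves, i.e. iff the two
triangulations share a diagonal; under this dictionary the rotation of layouts (a rotation,
followed by a second one if a subtanglegram appears) becomes the flip of pairs (a flip, followed by
a second one if the new diagonal lies in the other triangulation).
-/

def Interleave (x y u v : ℕ) : Prop := (x < u ∧ u < y ∧ y < v) ∨ (u < x ∧ x < v ∧ v < y)

theorem Interleave.symm {x y u v : ℕ} (h : Interleave x y u v) : Interleave u v x y := Or.symm h

namespace PTree

theorem leaves_pos (P : PTree) : 0 < P.leaves := by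
  induction P <;> simp only [leaves] <;> omega

/-- `P.Span a x y`: when the leaves of `P` sit at positions `a, a + 1, …`, the leaves of some
subtree of `P` occupy exactly the positions `x, …, y - 1`. -/
def Span : PTree → ℕ → ℕ → ℕ → Prop
  | leaf, a, x, y => x = a ∧ y = a + 1
  | node l r, a, x, y =>
      (x = a ∧ y = a + l.leaves + r.leaves) ∨ l.Span a x y ∨ r.Span (a + l.leaves) x y

variable {P l r : PTree} {a x y u v : ℕ}

theorem Span.bounds (h : P.Span a x y) : a ≤ x ∧ x < y ∧ y ≤ a + P.leaves := by
  induction P generalizing a with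
  | leaf => obtain ⟨rfl, rfl⟩ := h; simp [leaves]
  | node l r ihl ihr =>
    have := l.leaves_pos
    have := r.leaves_pos
    simp only [leaves]
    rcases h with ⟨rfl, rfl⟩ | h | h
    · omega
    · have := ihl h; omega
    · have := ihr h; omega

theorem Span.node_left (h : l.Span a x y) : (node l r).Span a x y := .inr (.inl h)

theorem Span.node_right (h : r.Span (a + l.leaves) x y) : (node l r).Span a x y := .inr (.inr h)

theorem span_root (P : PTree) (a : ℕ) : P.Span a a (a + P.leaves) := by
  cases P <;> simp [Span, leaves, add_assoc]

theorem span_unit (P : PTree) (hax : a ≤ x) (hx : x < a + P.leaves) : P.Span a x (x + 1) := by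
  induction P generalizing a with
  | leaf => simp only [leaves] at hx; exact ⟨by omega, by omega⟩
  | node l r ihl ihr =>
    simp only [leaves] at hx
    rcases lt_or_ge x (a + l.leaves) with h | h
    · exact (ihl hax h).node_left
    · exact (ihr h (by omega)).node_right

theorem span_node_left_iff : (node l r).Span a x y ∧ y ≤ a + l.leaves ↔ l.Span a x y := by
  refine ⟨fun ⟨h, hy⟩ => ?_, fun h => ⟨h.node_left, h.bounds.2.2⟩⟩
  have := r.leaves_pos
  rcases h with ⟨-, rfl⟩ | h | h
  · omega
  · exact h
  · have := h.bounds; omega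

theorem span_node_right_iff :
    (node l r).Span a x y ∧ a + l.leaves ≤ x ↔ r.Span (a + l.leaves) x y := by
  refine ⟨fun ⟨h, hx⟩ => ?_, fun h => ⟨h.node_right, h.bounds.1⟩⟩
  have := l.leaves_pos
  rcases h with ⟨rfl, -⟩ | h | h
  · omega
  · have := h.bounds; omega
  · exact h

theorem Span.not_interleave (h₁ : P.Span a x y) (h₂ : P.Span a u v) : ¬ Interleave x y u v := by
  induction P generalizing a with
  | leaf => obtain ⟨rfl, rfl⟩ := h₁; obtain ⟨rfl, rfl⟩ := h₂; simp [Interleave]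
  | node l r ihl ihr =>
    have b₁ := h₁.bounds
    have b₂ := h₂.bounds
    simp only [leaves] at b₁ b₂
    rcases h₁ with ⟨rfl, rfl⟩ | h₁ | h₁ <;> rcases h₂ with ⟨rfl, rfl⟩ | h₂ | h₂
    all_goals first
      | exact ihl h₁ h₂
      | exact ihr h₁ h₂
      | (try have := h₁.bounds); (try have := h₂.bounds); unfold Interleave; omega

theorem span_of_forall_not_interleave (hax : a ≤ x) (hxy : x < y) (hy : y ≤ a + P.leaves)
    (h : ∀ u v, P.Span a u v → ¬ Interleave x y u v) : P.Span a x y := by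
  induction P generalizing a with
  | leaf => exact ⟨by simp only [leaves] at hy; omega, by simp only [leaves] at hy; omega⟩
  | node l r ihl ihr =>
    simp only [leaves] at hy
    by_cases hroot : x = a ∧ y = a + l.leaves + r.leaves
    · exact .inl hroot
    rcases le_or_gt y (a + l.leaves) with hyl | hyl
    · exact (ihl hax hyl fun u v huv => h u v huv.node_left).node_left
    · have hl := h _ _ (l.span_root a).node_left
      have hr := h _ _ (r.span_root (a + l.leaves)).node_right
      refine (ihr ?_ (by omega) fun u v huv => h u v huv.node_right).node_right
      unfold Interleave at hl hr
      omega

theorem leaves_eq_of_span_iff {Q : PTree} (h : ∀ x y, P.Span a x y ↔ Q.Span a x y) :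
    P.leaves = Q.leaves := by
  have := ((h _ _).1 (P.span_root a)).bounds
  have := ((h _ _).2 (Q.span_root a)).bounds
  omega

theorem leaves_le_of_span {l' r' : PTree} (hlr : l.leaves + r.leaves = l'.leaves + r'.leaves)
    (h : (node l' r').Span a (a + l.leaves) (a + l.leaves + r.leaves)) : l'.leaves ≤ l.leaves := by
  have := l.leaves_pos
  have := r'.leaves_pos
  rcases h with ⟨h, -⟩ | h | h
  · omega
  · have := h.bounds; omega
  · have := h.bounds; omega

theorem eq_of_span_iff {Q : PTree} (h : ∀ x y, P.Span a x y ↔ Q.Span a x y) : P = Q := by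
  have hPQ := leaves_eq_of_span_iff h
  induction P generalizing Q a with
  | leaf =>
    cases Q with
    | leaf => rfl
    | node l r => have := l.leaves_pos; have := r.leaves_pos; simp only [leaves] at hPQ; omega
  | node l r ihl ihr =>
    cases Q with
    | leaf => have := l.leaves_pos; have := r.leaves_pos; simp only [leaves] at hPQ; omega
    | node l' r' =>
      simp only [leaves] at hPQ
      have hl : l.leaves = l'.leaves := le_antisymm
        (leaves_le_of_span hPQ.symm ((h _ _).2 (r'.span_root (a + l'.leaves)).node_right))
        (leaves_le_of_span hPQ ((h _ _).1 (r.span_root (a + l.leaves)).node_right))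
      have hsl : ∀ x y, l.Span a x y ↔ l'.Span a x y := fun x y =>
        calc l.Span a x y ↔ (node l r).Span a x y ∧ y ≤ a + l.leaves := span_node_left_iff.symm
          _ ↔ (node l' r').Span a x y ∧ y ≤ a + l'.leaves := by rw [h, hl]
          _ ↔ l'.Span a x y := span_node_left_iff
      have hsr : ∀ x y, r.Span (a + l.leaves) x y ↔ r'.Span (a + l.leaves) x y := fun x y =>
        calc r.Span (a + l.leaves) x y ↔ (node l r).Span a x y ∧ a + l.leaves ≤ x :=
              span_node_right_iff.symm
          _ ↔ (node l' r').Span a x y ∧ a + l'.leaves ≤ x := by rw [h, hl]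
          _ ↔ r'.Span (a + l.leaves) x y := by rw [hl]; exact span_node_right_iff
      have hPQ' : r.leaves = r'.leaves := by omega
      rw [ihl hsl hl, ihr hsr hPQ']

theorem Span.exists_subAt (h : P.Span a x y) :
    ∃ b u, SubAt P b u ∧ x = a + b ∧ y = x + u.leaves := by
  induction P generalizing a with
  | leaf => exact ⟨0, leaf, .refl _, by rw [h.1]; rfl, by rw [h.1, h.2]; rfl⟩
  | node l r ihl ihr =>
    rcases h with ⟨rfl, rfl⟩ | h | h
    · exact ⟨0, node l r, .refl _, rfl, by simp [leaves, add_assoc]⟩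
    · obtain ⟨b, u, hu, rfl, rfl⟩ := ihl h
      exact ⟨b, u, .left r hu, rfl, rfl⟩
    · obtain ⟨b, u, hu, rfl, rfl⟩ := ihr h
      exact ⟨l.leaves + b, u, .right l hu, by omega, rfl⟩

end PTree

open PTree

theorem SubAt.span {P u : PTree} {b : ℕ} (h : SubAt P b u) (a : ℕ) :
    P.Span a (a + b) (a + b + u.leaves) := by
  induction h generalizing a with
  | refl t => simpa using t.span_root a
  | left r _ ih => exact (ih a).node_left
  | right l _ ih => simpa [add_assoc] using (ih (a + l.leaves)).node_right (l := l)

theorem irredLayout_iff_span {P Q : PTree} : IrredLayout (P, Q) ↔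
    ¬ ∃ x y, P.Span 0 x y ∧ Q.Span 0 x y ∧ x + 2 ≤ y ∧ y < x + P.leaves := by
  dsimp only [IrredLayout]
  refine not_congr ⟨?_, ?_⟩
  · rintro ⟨b, u, v, hu, hv, huv, h2, hlt⟩
    exact ⟨b, b + u.leaves, by simpa using hu.span 0, by simpa [huv] using hv.span 0, by omega,
      by omega⟩
  · rintro ⟨x, y, hP, hQ, h2, hlt⟩
    obtain ⟨b, u, hu, rfl, rfl⟩ := hP.exists_subAt
    obtain ⟨b', v, hv, hb, hy⟩ := hQ.exists_subAt
    obtain rfl : b = b' := by simpa using hb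
    exact ⟨b, u, v, hu, hv, by omega, by simpa using h2, by simpa using hlt⟩

theorem irredLayout_comm {P Q : PTree} (h : P.leaves = Q.leaves) :
    IrredLayout (P, Q) ↔ IrredLayout (Q, P) := by
  simp only [irredLayout_iff_span, h, and_left_comm (a := P.Span 0 _ _)]

section Construction

variable {n : ℕ} {F : ℕ → ℕ → Prop}

theorem exists_split_of_maximal (hnc : ∀ x y u v, F x y → F u v → ¬ Interleave x y u v)
    (hmax : ∀ x y, x < y → y ≤ n → (∀ u v, F u v → ¬ Interleave x y u v) → F x y)
    {a b : ℕ} (hab : F a b) (hb : b ≤ n) (h2 : a + 2 ≤ b) :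
    ∃ k, a < k ∧ k < b ∧ F a k ∧ F k b ∧
      ∀ x y, F x y → a ≤ x → y ≤ b → x < k → k < y → x = a ∧ y = b := by
  classical
  have hunit : F a (a + 1) :=
    hmax a (a + 1) (by omega) (by omega) fun u v _ h => by unfold Interleave at h; omega
  set k := Nat.findGreatest (F a) (b - 1)
  have hak : a + 1 ≤ k := Nat.le_findGreatest (by omega) hunit
  have hkb : k ≤ b - 1 := Nat.findGreatest_le _
  have hFk : F a k := Nat.findGreatest_spec (by omega : a + 1 ≤ b - 1) hunit
  have hstraddle : ∀ x y, F x y → a ≤ x → y ≤ b → x < k → k < y → x = a ∧ y = b := by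
    intro x y hxy hax hyb hxk hky
    rcases hax.eq_or_lt with rfl | hax
    · refine ⟨rfl, by_contra fun hy => Nat.findGreatest_is_greatest hky (by omega) hxy⟩
    · exact absurd (.inl ⟨hax, hxk, hky⟩) (hnc _ _ _ _ hFk hxy)
  refine ⟨k, by omega, by omega, hFk, hmax k b (by omega) hb fun u v huv hI => ?_, hstraddle⟩
  rcases hI with ⟨hku, hub, hbv⟩ | ⟨huk, hkv, hvb⟩
  · exact hnc _ _ _ _ hab huv (.inl ⟨by omega, hub, hbv⟩)
  · rcases le_or_gt a u with hau | hua
    · have := hstraddle u v huv hau hvb.le huk hkv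
      omega
    · exact hnc _ _ _ _ hab huv (.inr ⟨hua, by omega, hvb⟩)

theorem PTree.exists_span_iff_of_maximal (hlt : ∀ x y, F x y → x < y)
    (hnc : ∀ x y u v, F x y → F u v → ¬ Interleave x y u v)
    (hmax : ∀ x y, x < y → y ≤ n → (∀ u v, F u v → ¬ Interleave x y u v) → F x y)
    {a b : ℕ} (hab : F a b) (hb : b ≤ n) :
    ∃ P : PTree, P.leaves = b - a ∧ ∀ x y, P.Span a x y ↔ F x y ∧ a ≤ x ∧ y ≤ b := by
  induction hm : b - a using Nat.strong_induction_on generalizing a b with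
  | _ m ih =>
  have := hlt a b hab
  by_cases h1 : b = a + 1
  · subst h1
    refine ⟨leaf, by simp only [leaves]; omega, fun x y => ⟨?_, ?_⟩⟩
    · rintro ⟨rfl, rfl⟩
      exact ⟨hab, le_rfl, le_rfl⟩
    · rintro ⟨hxy, hax, hyb⟩
      have := hlt x y hxy
      exact ⟨by omega, by omega⟩
  obtain ⟨k, hak, hkb, hFak, hFkb, hstraddle⟩ := exists_split_of_maximal hnc hmax hab hb (by omega)
  obtain ⟨L, hL, hLspan⟩ := ih (k - a) (by omega) hFak (by omega) rfl
  obtain ⟨R, hR, hRspan⟩ := ih (b - k) (by omega) hFkb hb rfl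
  refine ⟨node L R, by simp only [leaves]; omega, fun x y => ?_⟩
  simp only [Span, hLspan, hL, show a + (k - a) = k by omega, hRspan, hR]
  constructor
  · rintro (⟨rfl, rfl⟩ | ⟨h, hax, hyk⟩ | ⟨h, hkx, hyb⟩)
    · exact ⟨by rwa [show k + (b - k) = b by omega], le_rfl, by omega⟩
    · exact ⟨h, hax, by omega⟩
    · exact ⟨h, by omega, hyb⟩
  · rintro ⟨h, hax, hyb⟩
    by_cases hyk : y ≤ k
    · exact .inr (.inl ⟨h, hax, hyk⟩)
    by_cases hkx : k ≤ x
    · exact .inr (.inr ⟨h, hkx, hyb⟩)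
    have := hstraddle x y h hax hyb (by omega) (by omega)
    exact .inl ⟨this.1, by omega⟩

end Construction

theorem Rot.leaves_eq {P P' : PTree} (h : Rot P P') : P.leaves = P'.leaves := by
  induction h <;> simp only [PTree.leaves] <;> omega

theorem Rot.symm {P P' : PTree} (h : Rot P P') : Rot P' P := by
  induction h with
  | base A B C => exact .base' A B C
  | base' A B C => exact .base A B C
  | left R _ ih => exact .left R ih
  | right L _ ih => exact .right L ih

namespace PTree

/-- `P'` is the rotation of `P` at the edge above the subtree spanning `[p, q)`, described by
its effect on spans. -/
def RotAt (P P' : PTree) (a p q : ℕ) : Prop :=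
  Rot P P' ∧ ¬ P'.Span a p q ∧ (∀ x y, P.Span a x y → (x, y) ≠ (p, q) → P'.Span a x y) ∧
    ∀ x y, a ≤ x → y ≤ a + P.leaves → Interleave x y p q →
      (∀ u v, P.Span a u v → (u, v) ≠ (p, q) → ¬ Interleave x y u v) → P'.Span a x y

variable {A B C P P' l r l' r' : PTree} {a p q : ℕ}

theorem not_span_node_node_right :
    ¬ (node A (node B C)).Span a a (a + A.leaves + B.leaves) := by
  have := A.leaves_pos; have := B.leaves_pos; have := C.leaves_pos
  rintro (⟨-, h⟩ | h | ⟨h, -⟩ | h | h)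
  · simp only [leaves] at h; omega
  all_goals (try have := h.bounds); omega

theorem not_span_node_left_node :
    ¬ (node (node A B) C).Span a (a + A.leaves) (a + A.leaves + B.leaves + C.leaves) := by
  have := A.leaves_pos; have := B.leaves_pos; have := C.leaves_pos
  rintro (⟨h, -⟩ | (⟨h, -⟩ | h | h) | h)
  all_goals (try have := h.bounds); (try simp only [leaves] at *); omega

/-- In the quadrilateral `a < a + |A| < a + |A| + |B| < a + |A| + |B| + |C|`, the only interval
crossing the diagonal of `node (node A B) C` and none of its sides is the other diagonal. -/
theorem rotAt_base (A B C : PTree) (a : ℕ) :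
    RotAt (node (node A B) C) (node A (node B C)) a a (a + A.leaves + B.leaves) := by
  refine ⟨.base A B C, not_span_node_node_right, fun x y h hne => ?_, fun x y hax hy hI h => ?_⟩
  · simp only [Span, leaves, ne_eq, Prod.mk.injEq, ← add_assoc] at h hne ⊢
    tauto
  have := A.leaves_pos; have := B.leaves_pos; have := C.leaves_pos
  have hA := h _ _ (A.span_root a).node_left.node_left
    (by simp only [ne_eq, Prod.mk.injEq]; omega)
  have hB := h _ _ (B.span_root (a + A.leaves)).node_right.node_left
    (by simp only [ne_eq, Prod.mk.injEq]; omega)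
  have hC := h _ _ (C.span_root (a + (node A B).leaves)).node_right
    (by simp only [leaves, ne_eq, Prod.mk.injEq]; omega)
  simp only [Interleave, leaves] at hy hI hA hB hC
  obtain ⟨rfl, rfl⟩ : x = a + A.leaves ∧ y = a + A.leaves + (B.leaves + C.leaves) := by omega
  exact .inr (.inr (.inl ⟨rfl, by simp [add_assoc]⟩))

theorem rotAt_base' (A B C : PTree) (a : ℕ) :
    RotAt (node A (node B C)) (node (node A B) C) a (a + A.leaves)
      (a + A.leaves + B.leaves + C.leaves) := by
  refine ⟨.base' A B C, not_span_node_left_node, fun x y h hne => ?_, fun x y hax hy hI h => ?_⟩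
  · simp only [Span, leaves, ne_eq, Prod.mk.injEq, ← add_assoc] at h hne ⊢
    tauto
  have := A.leaves_pos; have := B.leaves_pos; have := C.leaves_pos
  have hA := h _ _ (A.span_root a).node_left (by simp only [ne_eq, Prod.mk.injEq]; omega)
  have hB := h _ _ (B.span_root (a + A.leaves)).node_left.node_right
    (by simp only [ne_eq, Prod.mk.injEq]; omega)
  have hC := h _ _ (C.span_root (a + A.leaves + B.leaves)).node_right.node_right
    (by simp only [ne_eq, Prod.mk.injEq]; omega)
  simp only [Interleave, leaves] at hy hI hA hB hC
  obtain ⟨rfl, rfl⟩ : x = a ∧ y = a + A.leaves + B.leaves := by omega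
  exact .inr (.inl (.inl ⟨rfl, rfl⟩))

theorem RotAt.node_left (h : RotAt l l' a p q) (hpq : l.Span a p q)
    (hroot : (p, q) ≠ (a, a + l.leaves)) : RotAt (node l r) (node l' r) a p q := by
  obtain ⟨hrot, hnot, hkeep, hcross⟩ := h
  have hl := hrot.leaves_eq
  have := hpq.bounds
  refine ⟨.left r hrot, ?_, ?_, fun x y hx hy hI h => ?_⟩
  · rintro (⟨-, rfl⟩ | h' | h')
    · have := r.leaves_pos; omega
    · exact hnot h'
    · have := h'.bounds; omega
  · rintro x y (⟨rfl, rfl⟩ | h' | h') hne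
    · exact .inl ⟨rfl, by rw [hl]⟩
    · exact (hkeep x y h' hne).node_left
    · exact (hl ▸ h').node_right
  · have hl := h _ _ (l.span_root a).node_left hroot.symm
    have hy' : y ≤ a + l.leaves := by simp only [ne_eq, Prod.mk.injEq, Interleave] at *; omega
    exact (hcross x y hx hy' hI fun u v hs hne => h u v hs.node_left hne).node_left

theorem RotAt.node_right (h : RotAt r r' (a + l.leaves) p q) (hpq : r.Span (a + l.leaves) p q)
    (hroot : (p, q) ≠ (a + l.leaves, a + l.leaves + r.leaves)) :
    RotAt (node l r) (node l r') a p q := by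
  obtain ⟨hrot, hnot, hkeep, hcross⟩ := h
  have hr := hrot.leaves_eq
  have := hpq.bounds
  refine ⟨.right l hrot, ?_, ?_, fun x y hx hy hI h => ?_⟩
  · rintro (⟨rfl, -⟩ | h' | h')
    · have := l.leaves_pos; omega
    · have := h'.bounds; omega
    · exact hnot h'
  · rintro x y (⟨rfl, rfl⟩ | h' | h') hne
    · exact .inl ⟨rfl, by rw [hr]⟩
    · exact h'.node_left
    · exact (hkeep x y h' hne).node_right
  · have hr := h _ _ (r.span_root (a + l.leaves)).node_right hroot.symm
    have hx' : a + l.leaves ≤ x := by simp only [ne_eq, Prod.mk.injEq, Interleave] at *; omega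
    exact (hcross x y hx' (by simpa [leaves, add_assoc] using hy) hI
      fun u v hs hne => h u v hs.node_right hne).node_right

theorem exists_rotAt (hpq : P.Span a p q) (h2 : p + 2 ≤ q)
    (hroot : ¬ (p = a ∧ q = a + P.leaves)) : ∃ P', RotAt P P' a p q := by
  induction P generalizing a with
  | leaf => obtain ⟨rfl, rfl⟩ := hpq; omega
  | node l r ihl ihr =>
    rcases hpq with ⟨rfl, rfl⟩ | hpq | hpq
    · exact absurd ⟨rfl, by simp [leaves, add_assoc]⟩ hroot
    · by_cases hl : (p, q) = (a, a + l.leaves)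
      · obtain ⟨rfl, rfl⟩ := Prod.mk.inj hl
        cases l with
        | leaf => simp only [leaves] at h2; omega
        | node A B => exact ⟨_, by simpa [leaves, add_assoc] using rotAt_base A B r p⟩
      · obtain ⟨l', hl'⟩ := ihl hpq (by simpa using hl)
        exact ⟨_, hl'.node_left hpq hl⟩
    · by_cases hr : (p, q) = (a + l.leaves, a + l.leaves + r.leaves)
      · obtain ⟨rfl, rfl⟩ := Prod.mk.inj hr
        cases r with
        | leaf => simp only [leaves] at h2; omega
        | node A B => exact ⟨_, by simpa [leaves, add_assoc] using rotAt_base' l A B a⟩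
      · obtain ⟨r', hr'⟩ := ihr hpq (by simpa using hr)
        exact ⟨_, hr'.node_right hpq hr⟩

end PTree

namespace Rot

variable {P P' : PTree}

theorem exists_rotAt (h : Rot P P') (a : ℕ) : ∃ p q, P.Span a p q ∧ RotAt P P' a p q := by
  induction h generalizing a with
  | base A B C => exact ⟨_, _, .inr (.inl (.inl ⟨rfl, rfl⟩)), rotAt_base A B C a⟩
  | base' A B C =>
    exact ⟨_, _, .inr (.inr (.inl ⟨rfl, by simp [add_assoc]⟩)), rotAt_base' A B C a⟩
  | left R h ih =>
    obtain ⟨p, q, hpq, hrot⟩ := ih a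
    refine ⟨p, q, hpq.node_left, hrot.node_left hpq fun he => ?_⟩
    obtain ⟨rfl, rfl⟩ := Prod.mk.inj he
    exact hrot.2.1 (h.leaves_eq ▸ span_root _ _)
  | right L h ih =>
    obtain ⟨p, q, hpq, hrot⟩ := ih (a + L.leaves)
    refine ⟨p, q, hpq.node_right, hrot.node_right hpq fun he => ?_⟩
    obtain ⟨rfl, rfl⟩ := Prod.mk.inj he
    exact hrot.2.1 (h.leaves_eq ▸ span_root _ _)

theorem eq_of_not_span (h : Rot P P') {a x y x' y' : ℕ}
    (h₁ : P.Span a x y) (h₁' : ¬ P'.Span a x y) (h₂ : P.Span a x' y') (h₂' : ¬ P'.Span a x' y') :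
    x = x' ∧ y = y' := by
  obtain ⟨p, q, -, -, -, hkeep, -⟩ := h.exists_rotAt a
  have e₁ : (x, y) = (p, q) := by_contra fun hne => h₁' (hkeep x y h₁ hne)
  have e₂ : (x', y') = (p, q) := by_contra fun hne => h₂' (hkeep x' y' h₂ hne)
  simpa using e₁.trans e₂.symm

end Rot

open Fin.NatCast

/-- `{x, y}` is a diagonal of the convex polygon with vertices `0, 1, …, n`. -/
def NatDiag (n x y : ℕ) : Prop := x + 2 ≤ y ∧ y ≤ n ∧ ¬ (x = 0 ∧ y = n)

theorem NatDiag.lt {n x y : ℕ} (h : NatDiag n x y) : x < y := by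
  unfold NatDiag at h; omega

theorem Interleave.natDiag_right {n x y u v : ℕ} (h : Interleave x y u v) (hy : y ≤ n)
    (hv : v ≤ n) : NatDiag n u v := by
  unfold Interleave at h; unfold NatDiag; omega

section Polygon

variable {n : ℕ}

theorem isDiag_mk_iff {m : ℕ} {i j : Fin m} :
    IsDiag m s(i, j) ↔ i ≠ j ∧ (i.val + 1) % m ≠ j.val ∧ (j.val + 1) % m ≠ i.val := by
  constructor
  · rintro ⟨a, b, h, hab, h₁, h₂⟩
    rcases Sym2.eq_iff.1 h with ⟨rfl, rfl⟩ | ⟨rfl, rfl⟩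
    · exact ⟨hab, h₁, h₂⟩
    · exact ⟨hab.symm, h₂, h₁⟩
  · rintro ⟨hij, h₁, h₂⟩
    exact ⟨i, j, rfl, hij, h₁, h₂⟩

theorem isDiag_natCast_iff {x y : ℕ} (hxy : x < y) (hy : y ≤ n) :
    IsDiag (n + 1) s((x : Fin (n + 1)), y) ↔ NatDiag n x y := by
  rw [isDiag_mk_iff, Ne, Fin.ext_iff, Fin.val_cast_of_lt (by omega : x < n + 1),
    Fin.val_cast_of_lt (by omega : y < n + 1), Nat.mod_eq_of_lt (by omega : x + 1 < n + 1)]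
  unfold NatDiag
  rcases hy.lt_or_eq with hy | rfl
  · rw [Nat.mod_eq_of_lt (by omega : y + 1 < n + 1)]; omega
  · rw [Nat.mod_self]; omega

theorem IsDiag.exists_natCast {d : Sym2 (Fin (n + 1))} (h : IsDiag (n + 1) d) :
    ∃ x y, NatDiag n x y ∧ d = s((x : Fin (n + 1)), y) := by
  obtain ⟨i, j, rfl, hij, -⟩ := id h
  wlog hlt : i < j generalizing i j
  · rw [Sym2.eq_swap] at h ⊢
    exact this j i h hij.symm (lt_of_le_of_ne (not_lt.1 hlt) hij.symm)
  exact ⟨i, j, (isDiag_natCast_iff (Fin.lt_def.1 hlt) (by omega)).1 (by simpa using h), by simp⟩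

theorem crosses_mk_iff {m : ℕ} {a b c d : Fin m} (hab : a < b) (hcd : c < d) :
    Crosses m s(a, b) s(c, d) ↔ Interleave a b c d := by
  simp only [Crosses, Interleave, Fin.lt_def] at *
  constructor
  · rintro (⟨a', b', c', d', h₁, h₂, h⟩ | ⟨a', b', c', d', h₁, h₂, h⟩) <;>
      rcases Sym2.eq_iff.1 h₁ with ⟨rfl, rfl⟩ | ⟨rfl, rfl⟩ <;>
      rcases Sym2.eq_iff.1 h₂ with ⟨rfl, rfl⟩ | ⟨rfl, rfl⟩ <;> omega
  · rintro (h | h)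
    · exact .inl ⟨a, b, c, d, rfl, rfl, h⟩
    · exact .inr ⟨c, d, a, b, rfl, rfl, h⟩

theorem crosses_natCast_iff {x y u v : ℕ} (hxy : x < y) (hy : y ≤ n) (huv : u < v) (hv : v ≤ n) :
    Crosses (n + 1) s((x : Fin (n + 1)), y) s((u : Fin (n + 1)), v) ↔ Interleave x y u v := by
  have cast : ∀ z, z ≤ n → ((z : Fin (n + 1)) : ℕ) = z := fun z hz => Fin.val_cast_of_lt (by omega)
  rw [crosses_mk_iff (by rw [Fin.lt_def, cast x (by omega), cast y hy]; exact hxy)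
    (by rw [Fin.lt_def, cast u (by omega), cast v hv]; exact huv),
    cast x (by omega), cast y hy, cast u (by omega), cast v hv]

theorem natCast_sym2_eq_iff {x y u v : ℕ} (hxy : x < y) (hy : y ≤ n) (huv : u < v) (hv : v ≤ n) :
    s((x : Fin (n + 1)), y) = s((u : Fin (n + 1)), v) ↔ x = u ∧ y = v := by
  have cast : ∀ z, z ≤ n → ((z : Fin (n + 1)) : ℕ) = z := fun z hz => Fin.val_cast_of_lt (by omega)
  rw [Sym2.eq_iff]
  simp only [Fin.ext_iff, cast x (by omega), cast y hy, cast u (by omega), cast v hv]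
  omega

end Polygon

namespace Triangulation

variable {m : ℕ} {T T' : Triangulation m}

theorem ext_diags (h : T.diags = T'.diags) : T = T' := by
  cases T; cases T'; cases h; rfl

theorem eq_of_subset (h : T.diags ⊆ T'.diags) : T = T' :=
  ext_diags (h.antisymm fun e he =>
    T.maximal e (T'.isDiag e he) fun f hf => T'.noncross e he f (h hf))

theorem exists_crosses_of_notMem {d : Sym2 (Fin m)} (hd : IsDiag m d) (hdT : d ∉ T.diags) :
    ∃ e ∈ T.diags, Crosses m d e := by
  by_contra! h
  exact hdT (T.maximal d hd h)

end Triangulation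

theorem IsFlip.exists_newDiag {m : ℕ} {T T' : Triangulation m} {d : Sym2 (Fin m)}
    (h : IsFlip T d T') : ∃ d', NewDiag T T' d' := by
  by_contra! hnew
  have : T' = T := Triangulation.eq_of_subset fun e he => by_contra fun heT => hnew e ⟨he, heT⟩
  exact h.2.1 (this ▸ h.1)

namespace PTree

variable {n : ℕ} {P Q : PTree}

open Classical in
/-- The plane dual triangulation of a tree with `n` leaves. -/
noncomputable def triangulation (P : PTree) (hP : P.leaves = n) : Triangulation (n + 1) where
  diags := Finset.univ.filter fun d =>
    ∃ x y, NatDiag n x y ∧ P.Span 0 x y ∧ d = s((x : Fin (n + 1)), y)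
  isDiag d hd := by
    obtain ⟨x, y, hxy, -, rfl⟩ := (Finset.mem_filter.1 hd).2
    exact (isDiag_natCast_iff hxy.lt hxy.2.1).2 hxy
  noncross d hd e he hc := by
    obtain ⟨x, y, hxy, hs, rfl⟩ := (Finset.mem_filter.1 hd).2
    obtain ⟨u, v, huv, hs', rfl⟩ := (Finset.mem_filter.1 he).2
    exact hs.not_interleave hs' ((crosses_natCast_iff hxy.lt hxy.2.1 huv.lt huv.2.1).1 hc)
  maximal d hd hnc := by
    obtain ⟨x, y, hxy, rfl⟩ := hd.exists_natCast
    refine Finset.mem_filter.2 ⟨Finset.mem_univ _, x, y, hxy, ?_, rfl⟩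
    refine span_of_forall_not_interleave (Nat.zero_le _) hxy.lt (by have := hxy.2.1; omega)
      fun u v huv hI => ?_
    have huv' := hI.natDiag_right hxy.2.1 (by have := huv.bounds.2.2; omega)
    exact hnc _ (Finset.mem_filter.2 ⟨Finset.mem_univ _, u, v, huv', huv, rfl⟩)
      ((crosses_natCast_iff hxy.lt hxy.2.1 huv'.lt huv'.2.1).2 hI)

theorem mem_triangulation (hP : P.leaves = n) {d : Sym2 (Fin (n + 1))} :
    d ∈ (P.triangulation hP).diags ↔
      ∃ x y, NatDiag n x y ∧ P.Span 0 x y ∧ d = s((x : Fin (n + 1)), y) := by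
  simp [triangulation]

theorem natCast_mem_triangulation_iff (hP : P.leaves = n) {x y : ℕ} (hxy : NatDiag n x y) :
    s((x : Fin (n + 1)), y) ∈ (P.triangulation hP).diags ↔ P.Span 0 x y := by
  rw [mem_triangulation]
  refine ⟨fun ⟨u, v, huv, hs, he⟩ => ?_, fun hs => ⟨x, y, hxy, hs, rfl⟩⟩
  obtain ⟨rfl, rfl⟩ := (natCast_sym2_eq_iff hxy.lt hxy.2.1 huv.lt huv.2.1).1 he
  exact hs

theorem span_of_not_natDiag (hQ : Q.leaves = n) {x y : ℕ} (hxy : x < y) (hy : y ≤ n)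
    (hd : ¬ NatDiag n x y) : Q.Span 0 x y := by
  unfold NatDiag at hd
  obtain rfl | ⟨rfl, rfl⟩ : y = x + 1 ∨ (x = 0 ∧ y = n) := by omega
  · exact Q.span_unit (Nat.zero_le _) (by omega)
  · simpa [hQ] using Q.span_root 0

theorem span_of_triangulation_subset (hP : P.leaves = n) (hQ : Q.leaves = n)
    (h : (P.triangulation hP).diags ⊆ (Q.triangulation hQ).diags) {x y : ℕ}
    (hs : P.Span 0 x y) : Q.Span 0 x y := by
  obtain ⟨-, hxy, hy⟩ := hs.bounds
  by_cases hd : NatDiag n x y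
  · exact (natCast_mem_triangulation_iff hQ hd).1
      (h ((natCast_mem_triangulation_iff hP hd).2 hs))
  · exact span_of_not_natDiag hQ hxy (by omega) hd

theorem eq_of_triangulation_eq (hP : P.leaves = n) (hQ : Q.leaves = n)
    (h : P.triangulation hP = Q.triangulation hQ) : P = Q :=
  eq_of_span_iff (a := 0) fun _ _ =>
    ⟨span_of_triangulation_subset hP hQ (h ▸ subset_rfl),
      span_of_triangulation_subset hQ hP (h ▸ subset_rfl)⟩

theorem exists_triangulation_eq (hn : 1 ≤ n) (T : Triangulation (n + 1)) :
    ∃ (P : PTree) (hP : P.leaves = n), P.triangulation hP = T := by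
  let F x y := x < y ∧ y ≤ n ∧ (NatDiag n x y → s((x : Fin (n + 1)), y) ∈ T.diags)
  have hnc : ∀ x y u v, F x y → F u v → ¬ Interleave x y u v := by
    rintro x y u v ⟨hxy, hy, hT₁⟩ ⟨huv, hv, hT₂⟩ hI
    exact T.noncross _ (hT₁ (hI.symm.natDiag_right hv hy)) _ (hT₂ (hI.natDiag_right hy hv))
      ((crosses_natCast_iff hxy hy huv hv).2 hI)
  have hmax : ∀ x y, x < y → y ≤ n → (∀ u v, F u v → ¬ Interleave x y u v) → F x y := by
    refine fun x y hxy hy h => ⟨hxy, hy, fun hd => T.maximal _ ((isDiag_natCast_iff hxy hy).2 hd)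
      fun e he hc => ?_⟩
    obtain ⟨u, v, huv, rfl⟩ := (T.isDiag e he).exists_natCast
    exact h u v ⟨huv.lt, huv.2.1, fun _ => he⟩ ((crosses_natCast_iff hxy hy huv.lt huv.2.1).1 hc)
  obtain ⟨P, hP, hspan⟩ := exists_span_iff_of_maximal (fun _ _ h => h.1) hnc hmax
    (a := 0) (b := n) ⟨by omega, le_rfl, fun h => absurd ⟨rfl, rfl⟩ h.2.2⟩ le_rfl
  refine ⟨P, hP, Triangulation.eq_of_subset fun d hd => ?_⟩
  obtain ⟨x, y, hxy, hs, rfl⟩ := (mem_triangulation hP).1 hd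
  exact ((hspan x y).1 hs).1.2.2 hxy

end PTree

theorem irredLayout_iff_disjoint {n : ℕ} {P Q : PTree} (hP : P.leaves = n) (hQ : Q.leaves = n) :
    IrredLayout (P, Q) ↔ Disjoint (P.triangulation hP).diags (Q.triangulation hQ).diags := by
  rw [irredLayout_iff_span, Finset.disjoint_left]
  constructor
  · intro h d hdP hdQ
    obtain ⟨x, y, hxy, hs, rfl⟩ := (mem_triangulation hP).1 hdP
    refine h ⟨x, y, hs, (natCast_mem_triangulation_iff hQ hxy).1 hdQ, hxy.1, ?_⟩
    unfold NatDiag at hxy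
    omega
  · rintro h ⟨x, y, hsP, hsQ, h2, hlt⟩
    have hb := hsP.bounds
    have hxy : NatDiag n x y := by unfold NatDiag; omega
    exact h ((natCast_mem_triangulation_iff hP hxy).2 hsP)
      ((natCast_mem_triangulation_iff hQ hxy).2 hsQ)


namespace Rot

variable {n : ℕ} {P P' : PTree}

theorem isFlip_triangulation (h : Rot P P') (hP : P.leaves = n) (hP' : P'.leaves = n) :
    ∃ d, IsFlip (P.triangulation hP) d (P'.triangulation hP') := by
  obtain ⟨p, q, hpq, -, hnot, hkeep, -⟩ := h.exists_rotAt 0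
  obtain ⟨-, hlt, hq⟩ := hpq.bounds
  have hd : NatDiag n p q :=
    by_contra fun hd => hnot (span_of_not_natDiag hP' hlt (by omega) hd)
  refine ⟨_, (natCast_mem_triangulation_iff hP hd).2 hpq,
    fun h' => hnot ((natCast_mem_triangulation_iff hP' hd).1 h'), fun e he hne => ?_⟩
  obtain ⟨x, y, hxy, hs, rfl⟩ := (mem_triangulation hP).1 he
  refine (natCast_mem_triangulation_iff hP' hxy).2 (hkeep x y hs fun h => hne ?_)
  obtain ⟨rfl, rfl⟩ := Prod.mk.inj h
  rfl

theorem newDiag_eq (h : Rot P P') (hP : P.leaves = n) (hP' : P'.leaves = n)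
    {e e' : Sym2 (Fin (n + 1))} (he : NewDiag (P.triangulation hP) (P'.triangulation hP') e)
    (he' : NewDiag (P.triangulation hP) (P'.triangulation hP') e') : e = e' := by
  obtain ⟨x, y, hxy, hs, rfl⟩ := (mem_triangulation hP').1 he.1
  obtain ⟨x', y', hxy', hs', rfl⟩ := (mem_triangulation hP').1 he'.1
  obtain ⟨rfl, rfl⟩ := h.symm.eq_of_not_span hs
    (fun hsP => he.2 ((natCast_mem_triangulation_iff hP hxy).2 hsP)) hs'
    (fun hsP => he'.2 ((natCast_mem_triangulation_iff hP hxy').2 hsP))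
  rfl

end Rot

namespace PTree

variable {n : ℕ} {P Q : PTree}

theorem rot_of_isFlip (hP : P.leaves = n) (hQ : Q.leaves = n) {d : Sym2 (Fin (n + 1))}
    (h : IsFlip (P.triangulation hP) d (Q.triangulation hQ)) : Rot P Q := by
  obtain ⟨p, q, hpq, hsp, rfl⟩ := (mem_triangulation hP).1 h.1
  obtain ⟨P', hrot, hnot, -, hcross⟩ :=
    exists_rotAt hsp hpq.1 (by rw [hP, zero_add]; exact hpq.2.2)
  have hP' : P'.leaves = n := hrot.leaves_eq ▸ hP
  suffices P'.triangulation hP' = Q.triangulation hQ from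
    eq_of_triangulation_eq hP' hQ this ▸ hrot
  refine Triangulation.eq_of_subset fun e he => ?_
  obtain ⟨x, y, hxy, hs, rfl⟩ := (mem_triangulation hP').1 he
  by_cases hsP : P.Span 0 x y
  · refine h.2.2 _ ((natCast_mem_triangulation_iff hP hxy).2 hsP) fun he => hnot ?_
    obtain ⟨rfl, rfl⟩ := (natCast_sym2_eq_iff hxy.lt hxy.2.1 hpq.lt hpq.2.1).1 he
    exact hs
  -- `{x, y}` is the diagonal created by the rotation, and so is the diagonal of `Q` crossing `d`.
  obtain ⟨e', he', hc⟩ := (Q.triangulation hQ).exists_crosses_of_notMem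
    ((isDiag_natCast_iff hpq.lt hpq.2.1).2 hpq) h.2.1
  obtain ⟨x', y', hxy', hs', rfl⟩ := (mem_triangulation hQ).1 he'
  have hI := (crosses_natCast_iff hpq.lt hpq.2.1 hxy'.lt hxy'.2.1).1 hc
  have hs'P' : P'.Span 0 x' y' := by
    refine hcross x' y' (Nat.zero_le _) (by have := hxy'.2.1; omega) hI.symm
      fun u v hsuv hne hI' => ?_
    have huv := hI'.natDiag_right hxy'.2.1 (by have := hsuv.bounds.2.2; omega)
    refine (Q.triangulation hQ).noncross _ he' _ (h.2.2 _
      ((natCast_mem_triangulation_iff hP huv).2 hsuv) fun he => hne ?_)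
      ((crosses_natCast_iff hxy'.lt hxy'.2.1 huv.lt huv.2.1).2 hI')
    obtain ⟨rfl, rfl⟩ := (natCast_sym2_eq_iff huv.lt huv.2.1 hpq.lt hpq.2.1).1 he
    rfl
  have hs'P : ¬ P.Span 0 x' y' := fun hs'P => (P.triangulation hP).noncross _ h.1 _
    ((natCast_mem_triangulation_iff hP hxy').2 hs'P) hc
  obtain ⟨rfl, rfl⟩ := hrot.symm.eq_of_not_span hs hsP hs'P' hs'P
  exact he'

end PTree

section Layouts

variable {n : ℕ} {P₁ P₂ Q₁ Q₂ : PTree}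

theorem lRelFst_iff_pairFlipFst (hP₁ : P₁.leaves = n) (hP₂ : P₂.leaves = n)
    (hQ₁ : Q₁.leaves = n) (hQ₂ : Q₂.leaves = n) (hP : IrredLayout (P₁, P₂))
    (hQ : IrredLayout (Q₁, Q₂)) :
    LRelFst (P₁, P₂) (Q₁, Q₂) ↔ PairFlipFst (P₁.triangulation hP₁, P₂.triangulation hP₂)
      (Q₁.triangulation hQ₁, Q₂.triangulation hQ₂) := by
  have hdisj := (irredLayout_iff_disjoint hP₁ hP₂).1 hP
  constructor
  · rintro ⟨P₁', hrot, ⟨hirr, heq⟩ | ⟨hred, P₂', hrot₂, -, heq⟩⟩ <;>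
      obtain ⟨rfl, rfl⟩ := Prod.mk.inj heq <;>
      obtain ⟨d, hflip⟩ := hrot.isFlip_triangulation hP₁ hQ₁ <;>
      obtain ⟨d', hnew⟩ := hflip.exists_newDiag
    · refine ⟨d, _, d', hflip, hnew, .inl ⟨fun hd' => ?_, rfl⟩⟩
      exact Finset.disjoint_left.1 ((irredLayout_iff_disjoint hQ₁ hP₂).1 hirr) hnew.1 hd'
    -- the diagonal that `Q₁` shares with `P₂` can only be the new one
    obtain ⟨e, he₁, he₂⟩ := Finset.not_disjoint_iff.1 (mt (irredLayout_iff_disjoint hQ₁ hP₂).2 hred)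
    have hd' : d' ∈ (P₂.triangulation hP₂).diags :=
      hrot.newDiag_eq hP₁ hQ₁ ⟨he₁, fun he => Finset.disjoint_left.1 hdisj he he₂⟩ hnew ▸ he₂
    obtain ⟨e, hflip₂⟩ := hrot₂.isFlip_triangulation hP₂ hQ₂
    obtain rfl : e = d' := by_contra fun hne => Finset.disjoint_left.1
      ((irredLayout_iff_disjoint hQ₁ hQ₂).1 hQ) hnew.1 (hflip₂.2.2 d' hd' (Ne.symm hne))
    exact ⟨d, _, e, hflip, hnew, .inr ⟨hd', _, hflip₂, rfl⟩⟩
  · rintro ⟨d, T₁', d', hflip, hnew, ⟨hd', heq⟩ | ⟨hd', T₂', hflip₂, heq⟩⟩ <;>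
      obtain ⟨rfl, h₂⟩ := Prod.mk.inj heq
    · obtain rfl := eq_of_triangulation_eq hQ₂ hP₂ h₂
      have hrot := rot_of_isFlip hP₁ hQ₁ hflip
      refine ⟨Q₁, hrot, .inl ⟨(irredLayout_iff_disjoint hQ₁ hQ₂).2
        (Finset.disjoint_left.2 fun e he₁ he₂ => hd' ?_), rfl⟩⟩
      exact hrot.newDiag_eq hP₁ hQ₁ ⟨he₁, fun he => Finset.disjoint_left.1 hdisj he he₂⟩ hnew ▸ he₂
    · subst h₂
      refine ⟨Q₁, rot_of_isFlip hP₁ hQ₁ hflip, .inr ⟨fun hirr => ?_, Q₂,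
        rot_of_isFlip hP₂ hQ₂ hflip₂, hQ, rfl⟩⟩
      exact Finset.disjoint_left.1 ((irredLayout_iff_disjoint hQ₁ hP₂).1 hirr) hnew.1 hd'

theorem pairFlipSnd_iff_pairFlipFst_swap {m : ℕ} {p q : Triangulation m × Triangulation m} :
    PairFlipSnd p q ↔ PairFlipFst p.swap q.swap := by
  simp only [PairFlipSnd, PairFlipFst, Prod.fst_swap, Prod.snd_swap, Prod.swap_eq_iff_eq_swap,
    Prod.swap_prod_mk]

theorem lRelSnd_iff_lRelFst_swap {q : PTree × PTree} (h : P₁.leaves = P₂.leaves) :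
    LRelSnd (P₁, P₂) q ↔ LRelFst (P₂, P₁) q.swap := by
  refine exists_congr fun P₂' => and_congr_right fun hrot => ?_
  have h₁ := irredLayout_comm (P := P₁) (Q := P₂') (h.trans hrot.leaves_eq)
  refine or_congr (and_congr h₁ (by rw [Prod.swap_eq_iff_eq_swap]; rfl))
    (and_congr (not_congr h₁) (exists_congr fun P₁' => and_congr_right fun hrot₁ => ?_))
  exact and_congr (irredLayout_comm (by rw [← hrot₁.leaves_eq, h, hrot.leaves_eq]))
    (by rw [Prod.swap_eq_iff_eq_swap]; rfl)

theorem lRel_iff_pairFlip (hP₁ : P₁.leaves = n) (hP₂ : P₂.leaves = n)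
    (hQ₁ : Q₁.leaves = n) (hQ₂ : Q₂.leaves = n) (hP : IrredLayout (P₁, P₂))
    (hQ : IrredLayout (Q₁, Q₂)) :
    LRel (P₁, P₂) (Q₁, Q₂) ↔ PairFlip (P₁.triangulation hP₁, P₂.triangulation hP₂)
      (Q₁.triangulation hQ₁, Q₂.triangulation hQ₂) := by
  refine or_congr (lRelFst_iff_pairFlipFst hP₁ hP₂ hQ₁ hQ₂ hP hQ) ?_
  rw [lRelSnd_iff_lRelFst_swap (hP₁.trans hP₂.symm), pairFlipSnd_iff_pairFlipFst_swap]
  exact lRelFst_iff_pairFlipFst hP₂ hP₁ hQ₂ hQ₁ ((irredLayout_comm (hP₁.trans hP₂.symm)).1 hP)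
    ((irredLayout_comm (hQ₁.trans hQ₂.symm)).1 hQ)

end Layouts

noncomputable def LVert.toDVert {n : ℕ} (p : LVert n) : DVert (n + 1) :=
  ⟨(p.1.1.triangulation p.2.1, p.1.2.triangulation p.2.2.1),
    (irredLayout_iff_disjoint p.2.1 p.2.2.1).1 p.2.2.2⟩

theorem LVert.toDVert_bijective {n : ℕ} (hn : 1 ≤ n) :
    Function.Bijective (LVert.toDVert (n := n)) := by
  refine ⟨fun p q h => ?_, fun ⟨⟨T₁, T₂⟩, hd⟩ => ?_⟩
  · have h' := congrArg Subtype.val h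
    simp only [LVert.toDVert, Prod.mk.injEq] at h'
    exact Subtype.ext (Prod.ext (eq_of_triangulation_eq _ _ h'.1)
      (eq_of_triangulation_eq _ _ h'.2))
  · obtain ⟨P₁, hP₁, rfl⟩ := exists_triangulation_eq hn T₁
    obtain ⟨P₂, hP₂, rfl⟩ := exists_triangulation_eq hn T₂
    exact ⟨⟨(P₁, P₂), hP₁, hP₂, (irredLayout_iff_disjoint hP₁ hP₂).2 hd⟩, rfl⟩

/-- The graph `L_n` of planar layouts of irreducible planar
tanglegrams of size `n` under rotations is isomorphic to the flip graph
`D_{n+1}` on ordered pairs of disjoint triangulations of a convex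
`(n+1)`-gon. -/
theorem LGraph_iso_DGraph (n : ℕ) (hn : 1 ≤ n) :
    Nonempty (LGraph n ≃g DGraph (n + 1)) := by
  refine ⟨⟨Equiv.ofBijective _ (LVert.toDVert_bijective hn), fun {p q} => ?_⟩⟩
  obtain ⟨⟨P₁, P₂⟩, hP₁, hP₂, hP⟩ := p
  obtain ⟨⟨Q₁, Q₂⟩, hQ₁, hQ₂, hQ⟩ := q
  exact and_congr (LVert.toDVert_bijective hn).1.ne_iff
    (or_congr (lRel_iff_pairFlip hP₁ hP₂ hQ₁ hQ₂ hP hQ).symm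
      (lRel_iff_pairFlip hQ₁ hQ₂ hP₁ hP₂ hQ hP).symm)
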